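/- Let C = {C_1,…,C_k} be a clustering of a finite set X ⊆ ℝ^m with centers μ_i and radii r(C_i), satisfying the γ-margin property with γ ≥ 1, and let ν ≥ 1, ρ ∈ (0,1]. If x* ∈ C_i satisfies d(x*, μ_i) < min{2ρ−1, γ−ν+1}·r(C_i), then for every y ∈ X the pair (x*, y) is not confused for the (ν,ρ) local distance-weak oracle; consequently, the truthful (ν,ρ) local distance-weak oracle Q satisfies Q(x*, y) = 1 if and only if y ∈ C_i, and Q(x*, y) = −1 if and only if y ∈ X \ C_i (it never answers 0 on a query involving x*). -/

import Mathlib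

open Finset
open scoped Classical

/-- The center (mean) of a finite cluster of points in Euclidean space. -/
noncomputable def ctr {m : ℕ} (C : Finset (EuclideanSpace ℝ (Fin m))) : EuclideanSpace ℝ (Fin m) :=
  (C.card : ℝ)⁻¹ • ∑ x ∈ C, x

/-- The radius of a cluster: the maximal distance of a member to the center. -/
noncomputable def rad {m : ℕ} (C : Finset (EuclideanSpace ℝ (Fin m))) : ℝ :=
  sSup ((fun x => dist x (ctr C)) '' (C : Set (EuclideanSpace ℝ (Fin m))))

/-- Confusion predicate for the (ν, ρ) local distance-weak oracle. -/
def LocalConfused {m k : ℕ} (Cl : Fin k → Finset (EuclideanSpace ℝ (Fin m))) (ν ρ : ℝ)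
    (x y : EuclideanSpace ℝ (Fin m)) : Prop :=
  (∃ i j, i ≠ j ∧ x ∈ Cl i ∧ y ∈ Cl j ∧
    dist x y < (ν - 1) * min (dist x (ctr (Cl i))) (dist y (ctr (Cl j)))) ∨
  (∃ i, x ∈ Cl i ∧ y ∈ Cl i ∧ 2 * ρ * rad (Cl i) < dist x y)

/-- Confusion predicate for the ρ global distance-weak oracle. -/
def GlobalConfused {m k : ℕ} (Cl : Fin k → Finset (EuclideanSpace ℝ (Fin m))) (ρ : ℝ)
    (x y : EuclideanSpace ℝ (Fin m)) : Prop :=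
  (∃ i j, i ≠ j ∧ x ∈ Cl i ∧ y ∈ Cl j ∧
    (ρ * rad (Cl i) < dist x (ctr (Cl i)) ∨ ρ * rad (Cl j) < dist y (ctr (Cl j)))) ∨
  (∃ i, x ∈ Cl i ∧ y ∈ Cl i ∧ 2 * ρ * rad (Cl i) < dist x y)

/-- Two points lie in the same cluster. -/
def SameCluster {m k : ℕ} (Cl : Fin k → Finset (EuclideanSpace ℝ (Fin m)))
    (x y : EuclideanSpace ℝ (Fin m)) : Prop :=
  ∃ i, x ∈ Cl i ∧ y ∈ Cl i

/-- The truthful (ν, ρ) local distance-weak oracle: answers 0 on confused pairs,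
1 on same-cluster non-confused pairs, and -1 on different-cluster non-confused pairs. -/
noncomputable def localQ {m k : ℕ} (Cl : Fin k → Finset (EuclideanSpace ℝ (Fin m))) (ν ρ : ℝ)
    (x y : EuclideanSpace ℝ (Fin m)) : ℤ :=
  if LocalConfused Cl ν ρ x y then 0 else if SameCluster Cl x y then 1 else -1

/-- The truthful ρ global distance-weak oracle. -/
noncomputable def globalQ {m k : ℕ} (Cl : Fin k → Finset (EuclideanSpace ℝ (Fin m))) (ρ : ℝ)
    (x y : EuclideanSpace ℝ (Fin m)) : ℤ :=
  if GlobalConfused Cl ρ x y then 0 else if SameCluster Cl x y then 1 else -1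

/-!
For `y` in the cluster of `x*`, the triangle inequality through the centre gives
`d(x*, y) < (2ρ - 1) r + r = 2ρ r`. For `y` outside it, the margin property applied at a point
realising the radius gives `γ r < d(y, μ)`, hence `d(x*, y) > γ r - (γ - ν + 1) r = (ν - 1) r`,
which is at least `(ν - 1) d(x*, μ)`.
-/

section Radius

variable {m : ℕ} {C : Finset (EuclideanSpace ℝ (Fin m))} {x y : EuclideanSpace ℝ (Fin m)}

lemma dist_ctr_le_rad (hx : x ∈ C) : dist x (ctr C) ≤ rad C :=
  le_csSup (C.finite_toSet.image _).bddAbove ⟨x, hx, rfl⟩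

lemma exists_dist_ctr_eq_rad (hC : C.Nonempty) : ∃ z ∈ C, dist z (ctr C) = rad C :=
  (hC.to_set.image _).csSup_mem (C.finite_toSet.image _)

lemma dist_lt_two_mul_rad {ρ : ℝ} (hx : dist x (ctr C) < (2 * ρ - 1) * rad C) (hy : y ∈ C) :
    dist x y < 2 * ρ * rad C := by
  have hy' := dist_ctr_le_rad hy
  calc dist x y ≤ dist x (ctr C) + dist y (ctr C) := dist_triangle_right x y (ctr C)
    _ < 2 * ρ * rad C := by linarith

lemma mul_rad_lt_dist_ctr {γ : ℝ} (hC : C.Nonempty)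
    (hmargin : ∀ z ∈ C, γ * dist z (ctr C) < dist y (ctr C)) :
    γ * rad C < dist y (ctr C) := by
  obtain ⟨z, hz, hzr⟩ := exists_dist_ctr_eq_rad hC
  simpa only [hzr] using hmargin z hz

lemma sub_one_mul_dist_ctr_lt_dist {γ ν : ℝ} (hν : 1 ≤ ν) (hx : x ∈ C)
    (hxμ : dist x (ctr C) < (γ - ν + 1) * rad C) (hy : γ * rad C < dist y (ctr C)) :
    (ν - 1) * dist x (ctr C) < dist x y := by
  have hr := dist_ctr_le_rad hx
  calc (ν - 1) * dist x (ctr C) ≤ (ν - 1) * rad C := by gcongr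
    _ = γ * rad C - (γ - ν + 1) * rad C := by ring
    _ < dist y (ctr C) - dist x (ctr C) := by linarith
    _ ≤ dist x y := by linarith [dist_triangle_left y (ctr C) x]

end Radius

section Oracle

variable {m k : ℕ} {Cl : Fin k → Finset (EuclideanSpace ℝ (Fin m))} {ν ρ : ℝ} {i : Fin k}
  {x y : EuclideanSpace ℝ (Fin m)}

lemma not_localConfused_of_mem (hx : ∀ j, x ∈ Cl j → j = i) (hy : ∀ j, y ∈ Cl j → j = i)
    (hclose : dist x y ≤ 2 * ρ * rad (Cl i)) : ¬ LocalConfused Cl ν ρ x y := by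
  rintro (⟨i', j, hij, hxi', hyj, -⟩ | ⟨i', hxi', -, hfar⟩)
  · exact hij ((hx i' hxi').trans (hy j hyj).symm)
  · rw [hx i' hxi'] at hfar
    linarith

lemma not_localConfused_of_not_mem (hν : 1 ≤ ν) (hx : ∀ j, x ∈ Cl j → j = i)
    (hy : y ∉ Cl i) (hfar : (ν - 1) * dist x (ctr (Cl i)) < dist x y) :
    ¬ LocalConfused Cl ν ρ x y := by
  rintro (⟨i', j, -, hxi', -, hnear⟩ | ⟨i', hxi', hyi', -⟩)
  · rw [hx i' hxi'] at hnear
    have : (ν - 1) * min (dist x (ctr (Cl i))) (dist y (ctr (Cl j))) ≤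
        (ν - 1) * dist x (ctr (Cl i)) := by
      gcongr
      exact min_le_left _ _
    linarith
  · exact hy (hx i' hxi' ▸ hyi')

lemma localQ_of_not_localConfused (h : ¬ LocalConfused Cl ν ρ x y) (hxi : x ∈ Cl i)
    (hx : ∀ j, x ∈ Cl j → j = i) :
    (localQ Cl ν ρ x y = 1 ↔ y ∈ Cl i) ∧ (localQ Cl ν ρ x y = -1 ↔ y ∉ Cl i) := by
  have hsame : SameCluster Cl x y ↔ y ∈ Cl i :=
    ⟨fun ⟨j, hxj, hyj⟩ => hx j hxj ▸ hyj, fun hy => ⟨i, hxi, hy⟩⟩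
  unfold localQ
  rw [if_neg h]
  by_cases hy : y ∈ Cl i <;> simp [hsame, hy]

end Oracle

theorem stmt2_general {m k : ℕ} (X : Finset (EuclideanSpace ℝ (Fin m)))
    (Cl : Fin k → Finset (EuclideanSpace ℝ (Fin m)))
    (hsub : ∀ i, Cl i ⊆ X)
    (hpart : ∀ x ∈ X, ∃! i, x ∈ Cl i)
    (γ : ℝ)
    (hmargin : ∀ i, ∀ x ∈ Cl i, ∀ y ∈ X, y ∉ Cl i →
      γ * dist x (ctr (Cl i)) < dist y (ctr (Cl i)))
    (ν ρ : ℝ) (hν : 1 ≤ ν)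
    (i : Fin k) (xs : EuclideanSpace ℝ (Fin m)) (hxs : xs ∈ Cl i)
    (hgood : dist xs (ctr (Cl i)) < min (2 * ρ - 1) (γ - ν + 1) * rad (Cl i)) :
    ∀ y ∈ X, ¬ LocalConfused Cl ν ρ xs y ∧
      (localQ Cl ν ρ xs y = 1 ↔ y ∈ Cl i) ∧
      (localQ Cl ν ρ xs y = -1 ↔ y ∉ Cl i) := by
  intro y hy
  have hr : 0 ≤ rad (Cl i) := dist_nonneg.trans (dist_ctr_le_rad hxs)
  have hgood₁ := hgood.trans_le (mul_le_mul_of_nonneg_right (min_le_left _ _) hr)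
  have hgood₂ := hgood.trans_le (mul_le_mul_of_nonneg_right (min_le_right _ _) hr)
  have hxs_uniq : ∀ j, xs ∈ Cl j → j = i :=
    fun j hj => (hpart xs (hsub i hxs)).unique hj hxs
  have hnc : ¬ LocalConfused Cl ν ρ xs y := by
    by_cases hyi : y ∈ Cl i
    · exact not_localConfused_of_mem hxs_uniq (fun j hj => (hpart y hy).unique hj hyi)
        (dist_lt_two_mul_rad hgood₁ hyi).le
    · exact not_localConfused_of_not_mem hν hxs_uniq hyi <|
        sub_one_mul_dist_ctr_lt_dist hν hxs hgood₂ <|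
          mul_rad_lt_dist_ctr ⟨xs, hxs⟩ fun z hz => hmargin i z hz y hy hyi
  exact ⟨hnc, localQ_of_not_localConfused hnc hxs hxs_uniq⟩

/-- Under the γ-margin property, if x* ∈ C_i satisfies
d(x*, μ_i) < min(2ρ−1, γ−ν+1)·r(C_i), then no pair (x*, y) is confused for the
(ν,ρ) local distance-weak oracle, and the truthful oracle satisfies
Q(x*,y) = 1 ↔ y ∈ C_i and Q(x*,y) = −1 ↔ y ∈ X \ C_i. -/
theorem stmt2 {m k : ℕ} (X : Finset (EuclideanSpace ℝ (Fin m)))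
    (Cl : Fin k → Finset (EuclideanSpace ℝ (Fin m)))
    (hsub : ∀ i, Cl i ⊆ X) (hne : ∀ i, (Cl i).Nonempty)
    (hpart : ∀ x ∈ X, ∃! i, x ∈ Cl i)
    (γ : ℝ) (hγ : 1 ≤ γ)
    (hmargin : ∀ i, ∀ x ∈ Cl i, ∀ y ∈ X, y ∉ Cl i →
      γ * dist x (ctr (Cl i)) < dist y (ctr (Cl i)))
    (ν ρ : ℝ) (hν : 1 ≤ ν) (hρ0 : 0 < ρ) (hρ1 : ρ ≤ 1)
    (i : Fin k) (xs : EuclideanSpace ℝ (Fin m)) (hxs : xs ∈ Cl i)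
    (hgood : dist xs (ctr (Cl i)) < min (2 * ρ - 1) (γ - ν + 1) * rad (Cl i)) :
    ∀ y ∈ X, ¬ LocalConfused Cl ν ρ xs y ∧
      (localQ Cl ν ρ xs y = 1 ↔ y ∈ Cl i) ∧
      (localQ Cl ν ρ xs y = -1 ↔ y ∉ Cl i) :=
  stmt2_general X Cl hsub hpart γ hmargin ν ρ hν i xs hxs hgood
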